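/- arXiv:1805.02989 — 4 statements merged into one kernel-verified Lean document; each statement's English description precedes it below -/
import Mathlib

section
/- Let n and ℓ̂ be integers with ℓ̂ ≥ 4 and n ≥ 4ℓ̂ - 1. For 1 ≤ j ≤ ℓ̂ - 3, define μ_i := (1/2)·binom(n-ℓ̂,2)·(n - 2ℓ̂ - 1 + i)/binom(n-i,4) for 1 ≤ i ≤ ℓ̂-3. Then ∑_{i=1}^{j} μ_i = (n-ℓ̂)(n-ℓ̂-1)(n - 4ℓ̂ + 1 + 3j)/((n-j-1)(n-j-2)(n-j-3)) + (n-ℓ̂)(n-ℓ̂-1)(4ℓ̂ - n - 1)/((n-1)(n-2)(n-3)). -/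
lemma cast4_aux (m : ℕ) : (((m + 4).choose 4 : ℝ)) =
    ((m : ℝ) + 4) * ((m : ℝ) + 3) * ((m : ℝ) + 2) * ((m : ℝ) + 1) / 24 := by
  have h : (m + 4).descFactorial 4 = (m + 4) * (m + 3) * (m + 2) * (m + 1) := by
    simp [Nat.descFactorial_succ, Nat.descFactorial_zero]; ring
  have h2 := Nat.descFactorial_eq_factorial_mul_choose (m + 4) 4
  rw [h] at h2
  have h3 := congrArg (Nat.cast : ℕ → ℝ) h2
  push_cast at h3
  norm_num [Nat.factorial] at h3
  linarith

set_option maxHeartbeats 1000000 in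
theorem stmt_3 (n l : ℕ) (hl : 4 ≤ l) (hn : 4 * l - 1 ≤ n) (j : ℕ)
    (hj1 : 1 ≤ j) (hj2 : j ≤ l - 3) :
    (∑ i ∈ Finset.Icc 1 j,
        (1/2 : ℝ) * ((n - l).choose 2 : ℝ) * ((n : ℝ) - 2 * l - 1 + i) / ((n - i).choose 4 : ℝ))
      = ((n : ℝ) - l) * ((n : ℝ) - l - 1) * ((n : ℝ) - 4 * l + 1 + 3 * j) /
          (((n : ℝ) - j - 1) * ((n : ℝ) - j - 2) * ((n : ℝ) - j - 3))
        + ((n : ℝ) - l) * ((n : ℝ) - l - 1) * (4 * (l : ℝ) - n - 1) /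
          (((n : ℝ) - 1) * ((n : ℝ) - 2) * ((n : ℝ) - 3)) := by
  have hn15 : 15 ≤ n := by omega
  have hnr : (15:ℝ) ≤ n := by exact_mod_cast hn15
  have hcast2 : ((n - l).choose 2 : ℝ) = ((n : ℝ) - l) * ((n : ℝ) - l - 1) / 2 := by
    rw [Nat.cast_choose_two, Nat.cast_sub (by omega : l ≤ n)]
  have hcast4 : ∀ i : ℕ, i ≤ l - 3 →
      ((n - i).choose 4 : ℝ) =
        ((n:ℝ)-i)*((n:ℝ)-i-1)*((n:ℝ)-i-2)*((n:ℝ)-i-3)/24 := by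
    intro i hi
    obtain ⟨m, hm⟩ : ∃ m, n - i = m + 4 := ⟨n - i - 4, by omega⟩
    have hmr : (m : ℝ) = (n : ℝ) - i - 4 := by
      have h5 : m + 4 + i = n := by omega
      have := congrArg (Nat.cast : ℕ → ℝ) h5
      push_cast at this
      linarith
    rw [hm, cast4_aux, hmr]; ring
  have hgap : ∀ i : ℕ, i ≤ l - 3 → ((i : ℝ) + 4 < n) := by
    intro i hi
    have : i + 4 < n := by omega
    exact_mod_cast this
  have d1 : ((n:ℝ) - 1) ≠ 0 := by nlinarith
  have d2 : ((n:ℝ) - 2) ≠ 0 := by nlinarith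
  have d3 : ((n:ℝ) - 3) ≠ 0 := by nlinarith
  revert hj2
  induction j, hj1 using Nat.le_induction with
  | base =>
    intro hj2
    have e2 : ((n:ℝ) - 1 - 1) ≠ 0 := by nlinarith
    have e3 : ((n:ℝ) - 1 - 2) ≠ 0 := by nlinarith
    have e4 : ((n:ℝ) - 1 - 3) ≠ 0 := by nlinarith
    rw [Finset.Icc_self, Finset.sum_singleton, hcast2, hcast4 1 hj2]
    push_cast
    field_simp
    ring
  | succ j hj ih =>
    intro hj2
    have hj2' : j ≤ l - 3 := by omega
    have hgapj := hgap (j + 1) hj2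
    push_cast at hgapj
    have hj0 : (0:ℝ) ≤ j := Nat.cast_nonneg j
    have f1 : ((n:ℝ) - j - 1) ≠ 0 := by nlinarith
    have f2 : ((n:ℝ) - j - 2) ≠ 0 := by nlinarith
    have f3 : ((n:ℝ) - j - 3) ≠ 0 := by nlinarith
    have g0 : ((n:ℝ) - (j+1)) ≠ 0 := by nlinarith
    have g1 : ((n:ℝ) - (j+1) - 1) ≠ 0 := by nlinarith
    have g2 : ((n:ℝ) - (j+1) - 2) ≠ 0 := by nlinarith
    have g3 : ((n:ℝ) - (j+1) - 3) ≠ 0 := by nlinarith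
    rw [Finset.sum_Icc_succ_top (by omega : 1 ≤ j + 1), ih hj2', hcast2,
      hcast4 (j + 1) hj2]
    push_cast
    field_simp
    ring
end

section
/- Let n and ℓ̂ be integers with ℓ̂ ≥ 4 and n ≥ 4ℓ̂ - 1, and for 1 ≤ t ≤ ℓ̂-3 define μ_t := (1/2)·binom(n-ℓ̂,2)·(n - 2ℓ̂ - 1 + t)/binom(n-t,4), and μ₀ := (n-ℓ̂)(n-ℓ̂-1)(n+1-4ℓ̂)/((n-1)(n-2)(n-3)). Then for each t with 1 ≤ t ≤ ℓ̂-3, the quantity c_t := ((n-t)/6)·μ_t - ∑_{j=0}^{t} μ_j equals 2(n-ℓ̂)(n-ℓ̂-1)(ℓ̂ - 1 - t)/((n-t-1)(n-t-2)(n-t-3)), and in particular c_t ≥ 0. -/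
lemma cast_choose_three (m : ℕ) :
    ((m.choose 3 : ℕ) : ℝ) = m * ((m : ℝ) - 1) * ((m : ℝ) - 2) / 6 := by
  induction m with
  | zero => norm_num
  | succ k ih =>
    rw [Nat.choose_succ_succ]
    push_cast
    rw [ih, Nat.cast_choose_two]
    ring

lemma cast_choose_four (m : ℕ) :
    ((m.choose 4 : ℕ) : ℝ) = m * ((m : ℝ) - 1) * ((m : ℝ) - 2) * ((m : ℝ) - 3) / 24 := by
  induction m with
  | zero => norm_num
  | succ k ih =>
    rw [Nat.choose_succ_succ]
    push_cast
    rw [ih, cast_choose_three]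
    ring

set_option maxHeartbeats 1000000 in
theorem stmt_4 (n l : ℕ) (hl : 4 ≤ l) (hn : 4 * l - 1 ≤ n)
    (μ : ℕ → ℝ)
    (hμ0 : μ 0 = ((n : ℝ) - l) * ((n : ℝ) - l - 1) * ((n : ℝ) + 1 - 4 * l) /
            (((n : ℝ) - 1) * ((n : ℝ) - 2) * ((n : ℝ) - 3)))
    (hμ : ∀ t, 1 ≤ t → t ≤ l - 3 →
      μ t = (1/2 : ℝ) * ((n - l).choose 2 : ℝ) * ((n : ℝ) - 2 * l - 1 + t) / ((n - t).choose 4 : ℝ))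
    (t : ℕ) (ht1 : 1 ≤ t) (ht2 : t ≤ l - 3) :
    (((n : ℝ) - t) / 6) * μ t - (∑ j ∈ Finset.range (t + 1), μ j)
      = 2 * ((n : ℝ) - l) * ((n : ℝ) - l - 1) * ((l : ℝ) - 1 - t) /
          (((n : ℝ) - t - 1) * ((n : ℝ) - t - 2) * ((n : ℝ) - t - 3)) ∧
    0 ≤ (((n : ℝ) - t) / 6) * μ t - (∑ j ∈ Finset.range (t + 1), μ j) := by
  have hln : l ≤ n := by omega
  have hl4 : (4 : ℝ) ≤ (l : ℝ) := by exact_mod_cast hl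
  have han : 4 * (l : ℝ) - 1 ≤ (n : ℝ) := by
    have h : 4 * l ≤ n + 1 := by omega
    have := (Nat.cast_le (α := ℝ)).2 h
    push_cast at this; linarith
  have hCl : ((n - l : ℕ).choose 2 : ℝ)
      = ((n : ℝ) - l) * ((n : ℝ) - l - 1) / 2 := by
    rw [Nat.cast_choose_two, Nat.cast_sub hln]
  -- closed form for μ s, 1 ≤ s ≤ l - 3
  have hclosed : ∀ s : ℕ, 1 ≤ s → s ≤ l - 3 →
      μ s = 6 * ((n : ℝ) - l) * ((n : ℝ) - l - 1) * ((n : ℝ) - 2 * l - 1 + s) /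
        (((n : ℝ) - s) * ((n : ℝ) - s - 1) * ((n : ℝ) - s - 2) * ((n : ℝ) - s - 3)) := by
    intro s hs1 hs2
    have hsl : (s : ℝ) + 3 ≤ (l : ℝ) := by
      have : s + 3 ≤ l := by omega
      exact_mod_cast this
    have hsub : ((n - s : ℕ) : ℝ) = (n : ℝ) - s := by
      have h : s ≤ n := by omega
      push_cast [Nat.cast_sub h]; ring
    rw [hμ s hs1 hs2, cast_choose_four, hCl, hsub]
    have h0 : (n : ℝ) - s ≠ 0 := by intro h; nlinarith
    have h1 : (n : ℝ) - s - 1 ≠ 0 := by intro h; nlinarith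
    have h2 : (n : ℝ) - s - 2 ≠ 0 := by intro h; nlinarith
    have h3 : (n : ℝ) - s - 3 ≠ 0 := by intro h; nlinarith
    field_simp
    ring
  have key : ∀ s : ℕ, 1 ≤ s → s ≤ l - 3 →
      (((n : ℝ) - s) / 6) * μ s - (∑ j ∈ Finset.range (s + 1), μ j)
        = 2 * ((n : ℝ) - l) * ((n : ℝ) - l - 1) * ((l : ℝ) - 1 - s) /
            (((n : ℝ) - s - 1) * ((n : ℝ) - s - 2) * ((n : ℝ) - s - 3)) := by
    intro s
    induction s with
    | zero => intro h; omega
    | succ k ih =>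
      intro _ hk2
      have hkl : (k : ℝ) + 4 ≤ (l : ℝ) := by
        have : k + 4 ≤ l := by omega
        exact_mod_cast this
      rcases Nat.eq_zero_or_pos k with hk0 | hkpos
      · subst hk0
        rw [Finset.sum_range_succ, Finset.sum_range_one, hμ0,
          hclosed 1 le_rfl (by omega)]
        push_cast
        have h1 : (n : ℝ) - 1 ≠ 0 := by linarith
        have h2 : (n : ℝ) - 2 ≠ 0 := by linarith
        have h3 : (n : ℝ) - 3 ≠ 0 := by linarith
        have h4 : (n : ℝ) - 4 ≠ 0 := by linarith
        have h2' : (n : ℝ) - 1 - 1 ≠ 0 := by intro h; apply h2; linarith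
        have h3' : (n : ℝ) - 1 - 2 ≠ 0 := by intro h; apply h3; linarith
        have h4' : (n : ℝ) - 1 - 3 ≠ 0 := by intro h; apply h4; linarith
        field_simp
        ring
      · have ih' := ih hkpos (by omega)
        have hsumk : (∑ j ∈ Finset.range (k + 1), μ j)
            = (((n : ℝ) - k) / 6) * μ k
              - 2 * ((n : ℝ) - l) * ((n : ℝ) - l - 1) * ((l : ℝ) - 1 - k) /
                (((n : ℝ) - k - 1) * ((n : ℝ) - k - 2) * ((n : ℝ) - k - 3)) := by
          linarith [ih']
        rw [Finset.sum_range_succ, hsumk, hclosed (k+1) (by omega) hk2,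
          hclosed k hkpos (by omega)]
        push_cast
        have h0 : (n : ℝ) - k ≠ 0 := by linarith
        have h1 : (n : ℝ) - k - 1 ≠ 0 := by linarith
        have h2 : (n : ℝ) - k - 2 ≠ 0 := by linarith
        have h3 : (n : ℝ) - k - 3 ≠ 0 := by linarith
        have h4 : (n : ℝ) - k - 4 ≠ 0 := by linarith
        have e1 : (n : ℝ) - ((k : ℝ) + 1) ≠ 0 := by intro h; apply h1; linarith
        have e2 : (n : ℝ) - ((k : ℝ) + 1) - 1 ≠ 0 := by intro h; apply h2; linarith
        have e3 : (n : ℝ) - ((k : ℝ) + 1) - 2 ≠ 0 := by intro h; apply h3; linarith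
        have e4 : (n : ℝ) - ((k : ℝ) + 1) - 3 ≠ 0 := by intro h; apply h4; linarith
        field_simp
        ring
  have heq := key t ht1 ht2
  refine ⟨heq, ?_⟩
  rw [heq]
  have htl : (t : ℝ) + 3 ≤ (l : ℝ) := by
    have : t + 3 ≤ l := by omega
    exact_mod_cast this
  apply div_nonneg
  · have h1 : (0:ℝ) ≤ (n : ℝ) - l := by linarith
    have h2 : (0:ℝ) ≤ (n : ℝ) - l - 1 := by linarith
    have h3 : (0:ℝ) ≤ (l : ℝ) - 1 - t := by linarith
    positivity
  · have h1 : (0:ℝ) ≤ (n : ℝ) - t - 1 := by linarith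
    have h2 : (0:ℝ) ≤ (n : ℝ) - t - 2 := by linarith
    have h3 : (0:ℝ) ≤ (n : ℝ) - t - 3 := by linarith
    positivity
end

section
/- For integers k, d, ℓ with 1 ≤ ℓ ≤ k - 4 ≤ d - 4, define g(ℓ) := d(d - ℓ - 1) - (1/2)(2d - k - ℓ + 1)(2d + k - 3ℓ - 5). If g(ℓ) ≥ 0 for some ℓ < k - 4, then g(ℓ + 1) ≥ 0. -/
/-!
The paper's `g` is a concave quadratic in `ℓ` whose forward difference is
`g (ℓ + 1) - g ℓ = 3d - k - 3ℓ - 5/2`. If this is nonnegative we are done. Otherwise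
`3d < 4k - 25/2`, and in that regime `g (k - 4) > 0`; concavity on `[ℓ, k - 4]` then gives
`g (ℓ + 1) ≥ min (g ℓ) (g (k - 4)) ≥ 0`.
-/

open Set

/-- The paper's `g(ℓ)` for an `(n = d + 1, k, d, ℓ)` secure regenerating code. -/
noncomputable def cornerGap (k d x : ℝ) : ℝ :=
  d * (d - x - 1) - (1 / 2) * (2 * d - k - x + 1) * (2 * d + k - 3 * x - 5)

namespace cornerGap

variable {k d : ℝ}

lemma add_one_sub (x : ℝ) :
    cornerGap k d (x + 1) - cornerGap k d x = 3 * d - k - 3 * x - 5 / 2 := by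
  unfold cornerGap; ring

lemma concaveOn_univ : ConcaveOn ℝ univ (cornerGap k d) := by
  refine ⟨convex_univ, fun x _ y _ a b ha hb hab => ?_⟩
  obtain rfl : b = 1 - a := by linarith
  have defect : cornerGap k d (a * x + (1 - a) * y) - (a * cornerGap k d x + (1 - a) * cornerGap k d y)
      = 3 / 2 * (a * (1 - a)) * (x - y) ^ 2 := by
    unfold cornerGap; ring
  simp only [smul_eq_mul]
  nlinarith [mul_nonneg (mul_nonneg ha hb) (sq_nonneg (x - y))]

lemma pos_k_sub_four (hkd : k ≤ d) (hdk : 3 * d < 4 * k - 25 / 2) :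
    0 < cornerGap k d (k - 4) := by
  unfold cornerGap
  nlinarith [mul_nonneg (sub_nonneg.2 hkd) (by linarith : (0 : ℝ) ≤ k - 3 * (d - k) - 25 / 2)]

lemma add_one_nonneg {x : ℝ} (hkd : k ≤ d) (hx : x + 1 ≤ k - 4) (h : 0 ≤ cornerGap k d x) :
    0 ≤ cornerGap k d (x + 1) := by
  rcases le_or_gt 0 (3 * d - k - 3 * x - 5 / 2) with hinc | hdec
  · linarith [add_one_sub (k := k) (d := d) x]
  · have hend := pos_k_sub_four hkd (by linarith)
    have hmin := (concaveOn_univ (k := k) (d := d)).min_le_of_mem_Icc (mem_univ x) (mem_univ (k - 4))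
      (⟨by linarith, hx⟩ : x + 1 ∈ Icc x (k - 4))
    exact (le_min h hend.le).trans hmin

end cornerGap

theorem stmt_10_general (k d ℓ : ℤ) (hℓ2 : ℓ < k - 4) (hkd : k ≤ d)
    (g : ℤ → ℝ)
    (hg : ∀ x : ℤ, g x = (d : ℝ) * ((d : ℝ) - x - 1)
        - (1/2) * (2 * (d : ℝ) - k - x + 1) * (2 * (d : ℝ) + k - 3 * x - 5))
    (h : 0 ≤ g ℓ) : 0 ≤ g (ℓ + 1) := by
  have hg' : ∀ x : ℤ, g x = cornerGap k d x := hg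
  rw [hg'] at h ⊢
  push_cast
  exact cornerGap.add_one_nonneg (by exact_mod_cast hkd)
    (by exact_mod_cast (by omega : ℓ + 1 ≤ k - 4)) h

theorem stmt_10 (k d ℓ : ℤ) (hℓ1 : 1 ≤ ℓ) (hℓ2 : ℓ < k - 4) (hkd : k ≤ d)
    (g : ℤ → ℝ)
    (hg : ∀ x : ℤ, g x = (d : ℝ) * ((d : ℝ) - x - 1)
        - (1/2) * (2 * (d : ℝ) - k - x + 1) * (2 * (d : ℝ) + k - 3 * x - 5))
    (h : 0 ≤ g ℓ) : 0 ≤ g (ℓ + 1) :=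
  stmt_10_general k d ℓ hℓ2 hkd g hg h
end

section
/- Let d, k, ℓ be integers with 1 ≤ ℓ ≤ k - 4 and k ≤ d. If ℓ ≤ ⌈(d-1)/2⌉ - 1, then d + √(d·ℓ) - (1/2)(k - ℓ)(2d - k - ℓ + 1) < 0. -/
/-!
Write `Γ(k, d, ℓ) = (1/2)(k - ℓ)(2d - k - ℓ + 1)`. Setting `m = k - ℓ` and `s = d - ℓ`,
`Γ - 2(2d - 2ℓ - 3) = (m - 4)(2s - m - 3)/2`, which is nonnegative for `4 ≤ m ≤ s`.
The hypothesis on `ℓ` says `2ℓ + 2 ≤ d`; together with `ℓ + 4 ≤ d` this gives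
`2(2d - 2ℓ - 3) ≥ (3d + ℓ)/2 = d + (d + ℓ)/2`, and strict AM–GM `√(dℓ) < (d + ℓ)/2`
concludes.
-/

def shaoGamma {R : Type*} [Field R] (k d ℓ : R) : R :=
  (1 / 2) * (k - ℓ) * (2 * d - k - ℓ + 1)

theorem two_mul_le_shaoGamma {R : Type*} [Field R] [LinearOrder R] [IsStrictOrderedRing R]
    {k d ℓ : R} (hℓk : ℓ + 4 ≤ k) (hkd : k ≤ d) :
    2 * (2 * d - 2 * ℓ - 3) ≤ shaoGamma k d ℓ := by
  have hfactor : shaoGamma k d ℓ - 2 * (2 * d - 2 * ℓ - 3)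
      = (1 / 2) * ((k - ℓ - 4) * (2 * d - k - ℓ - 3)) := by
    unfold shaoGamma; ring
  have hnonneg : 0 ≤ (k - ℓ - 4) * (2 * d - k - ℓ - 3) :=
    mul_nonneg (by linarith) (by linarith)
  linarith

theorem Real.sqrt_mul_lt_add_div_two {x y : ℝ} (hx : 0 ≤ x) (hy : 0 ≤ y) (hxy : x ≠ y) :
    √(x * y) < (x + y) / 2 := by
  have hsq : 0 < (x - y) ^ 2 := sq_pos_of_ne_zero (sub_ne_zero.mpr hxy)
  have hpos : 0 < (x + y) / 2 := by rcases hxy.lt_or_gt with h | h <;> linarith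
  rw [Real.sqrt_lt' hpos]
  nlinarith

theorem Int.two_mul_add_two_le_of_le_ceil_sub_one {d ℓ : ℤ}
    (h : ℓ ≤ ⌈((d : ℝ) - 1) / 2⌉ - 1) : 2 * ℓ + 2 ≤ d := by
  have hlt : (ℓ : ℝ) < ((d : ℝ) - 1) / 2 := Int.lt_ceil.mp (by omega)
  have : 2 * ℓ + 1 < d := by exact_mod_cast (by linarith : (2 * ℓ + 1 : ℝ) < d)
  omega

theorem stmt_14 (d k ℓ : ℤ) (hℓ1 : 1 ≤ ℓ) (hℓ2 : ℓ ≤ k - 4) (hkd : k ≤ d)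
    (hℓ3 : ℓ ≤ ⌈(((d : ℝ) - 1) / 2)⌉ - 1) :
    (d : ℝ) + Real.sqrt ((d : ℝ) * (ℓ : ℝ))
      - (1/2) * ((k : ℝ) - ℓ) * (2 * (d : ℝ) - k - ℓ + 1) < 0 := by
  have hdℓ : (2 * ℓ + 2 : ℝ) ≤ d := by
    exact_mod_cast Int.two_mul_add_two_le_of_le_ceil_sub_one hℓ3
  have hℓk : (ℓ + 4 : ℝ) ≤ k := by exact_mod_cast (by omega : ℓ + 4 ≤ k)
  have hkdR : (k : ℝ) ≤ d := by exact_mod_cast hkd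
  have hℓpos : (0 : ℝ) < ℓ := by exact_mod_cast hℓ1
  have hΓ := two_mul_le_shaoGamma hℓk hkdR
  have hamgm :=
    Real.sqrt_mul_lt_add_div_two (by linarith) hℓpos.le (by linarith : (d : ℝ) ≠ ℓ)
  unfold shaoGamma at hΓ
  linarith
end
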